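/- arXiv:2209.08341 — 2 statements merged into one kernel-verified Lean document; each statement's English description precedes it below -/
import Mathlib

section
/- There exists a constant K>0, depending only on T, such that for all n∈ℕ⁺, all t∈[0,T] and all x,y∈[0,1], ∫_0^1 |G^n_t(x,z) − G^n_t(y,z)|² dz ≤ K·|x−y|. -/
open MeasureTheory Real Filter
open scoped ENNReal

noncomputable section

/-- φ_j(x) = √2 sin(jπx) -/
def phi (j : ℕ) (x : ℝ) : ℝ := Real.sqrt 2 * Real.sin (j * Real.pi * x)

/-- κ_n(z) = ⌊zn⌋/n -/
def kappan (n : ℕ) (z : ℝ) : ℝ := (⌊z * n⌋ : ℝ) / n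

/-- Π_n, piecewise linear interpolation with nodes 0, 1/n, …, 1 -/
def Pin (n : ℕ) (w : ℝ → ℝ) (x : ℝ) : ℝ :=
  w (kappan n x) + ((n : ℝ) * x - (⌊x * n⌋ : ℝ)) * (w (kappan n x + 1 / n) - w (kappan n x))

/-- c^n_j = sin²(jπ/(2n)) / (jπ/(2n))² -/
def cn (n j : ℕ) : ℝ :=
  (Real.sin (j * Real.pi / (2 * n)))^2 / (j * Real.pi / (2 * n))^2

/-- j-th term of the Green function series -/
def greenTerm (j : ℕ) (t x y : ℝ) : ℝ :=
  Real.sin (j * Real.pi * t) / (j * Real.pi) * phi j x * phi j y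

/-- Green function G_t(x,y) = ∑_{j≥1} sin(jπt)/(jπ) φ_j(x) φ_j(y), as limit of partial sums -/
def greenG (t x y : ℝ) : ℝ :=
  limUnder atTop (fun N : ℕ => ∑ j ∈ Finset.Icc 1 N, greenTerm j t x y)

/-- discrete Green function G^n_t(x,y) -/
def greenGn (n : ℕ) (t x y : ℝ) : ℝ :=
  ∑ j ∈ Finset.Icc 1 (n - 1),
    Real.sin (j * Real.pi * t * Real.sqrt (cn n j)) / (j * Real.pi * Real.sqrt (cn n j)) *
      Pin n (phi j) x * phi j (kappan n y)

/-- discrete Dirichlet Laplacian Δ_n -/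
def discLap (n : ℕ) (w : ℝ → ℝ) (z : ℝ) : ℝ :=
  if z ∈ Set.Ico ((1:ℝ)/n) 1 then
    (n:ℝ)^2 * (w (kappan n z + 1/n) - 2 * w (kappan n z) + w (kappan n z - 1/n))
  else 0

/-- O_T = [0,T] × [0,1] -/
def OT (T : ℝ) : Set (ℝ × ℝ) := Set.Icc 0 T ×ˢ Set.Icc 0 1

/-- f solves the skeleton equation of the stochastic wave equation with control h -/
def SolvesSkeleton (T : ℝ) (u₀ v₀ b σ : ℝ → ℝ) (h f : ℝ → ℝ → ℝ) : Prop :=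
  ∀ t ∈ Set.Icc (0:ℝ) T, ∀ x ∈ Set.Icc (0:ℝ) 1,
    f t x = (∫ z in (0:ℝ)..1, greenG t x z * v₀ z)
      + deriv (fun s => ∫ z in (0:ℝ)..1, greenG s x z * u₀ z) t
      + (∫ s in (0:ℝ)..t, ∫ z in (0:ℝ)..1, greenG (t - s) x z * b (f s z))
      + ∫ s in (0:ℝ)..t, ∫ z in (0:ℝ)..1, greenG (t - s) x z * σ (f s z) * h s z

/-- f solves the discrete (spatial finite difference, level n) skeleton equation with control h -/
def SolvesDiscSkeleton (T : ℝ) (n : ℕ) (u₀ v₀ b σ : ℝ → ℝ) (h f : ℝ → ℝ → ℝ) : Prop :=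
  ∀ t ∈ Set.Icc (0:ℝ) T, ∀ x ∈ Set.Icc (0:ℝ) 1,
    f t x = (∫ z in (0:ℝ)..1, greenGn n t x z * v₀ (kappan n z))
      + (∫ z in (0:ℝ)..1, deriv (fun s => greenGn n s x z) t * u₀ (kappan n z))
      + (∫ s in (0:ℝ)..t, ∫ z in (0:ℝ)..1, greenGn n (t - s) x z * b (f s (kappan n z)))
      + ∫ s in (0:ℝ)..t, ∫ z in (0:ℝ)..1, greenGn n (t - s) x z * σ (f s (kappan n z)) * h s z

/-- h is square integrable on O_T -/
def SqIntOn (T : ℝ) (h : ℝ → ℝ → ℝ) : Prop :=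
  MeasureTheory.IntegrableOn (fun p : ℝ × ℝ => (h p.1 p.2)^2) (OT T)

/-- squared L²(O_T) norm -/
def L2sq (T : ℝ) (h : ℝ → ℝ → ℝ) : ℝ := ∫ p in OT T, (h p.1 p.2)^2

/-- one-point rate functional J_y for the continuous skeleton equation -/
def Jy (T x₀ y : ℝ) (u₀ v₀ b σ : ℝ → ℝ) (f : ℝ → ℝ → ℝ) : ℝ≥0∞ :=
  if f T x₀ = y then
    sInf { c : ℝ≥0∞ | ∃ h : ℝ → ℝ → ℝ, SqIntOn T h ∧ SolvesSkeleton T u₀ v₀ b σ h f ∧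
      c = ENNReal.ofReal (1/2 * L2sq T h) }
  else ⊤

/-- one-point rate functional J^n_y for the discrete skeleton equation of level n -/
def Jny (T x₀ y : ℝ) (u₀ v₀ b σ : ℝ → ℝ) (n : ℕ) (f : ℝ → ℝ → ℝ) : ℝ≥0∞ :=
  if f T x₀ = y then
    sInf { c : ℝ≥0∞ | ∃ h : ℝ → ℝ → ℝ, SqIntOn T h ∧ SolvesDiscSkeleton T n u₀ v₀ b σ h f ∧
      c = ENNReal.ofReal (1/2 * L2sq T h) }
  else ⊤

/-- the control recovering f in the discrete skeleton equation (inverse of Υⁿ) -/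
def controlOf (T : ℝ) (b σ : ℝ → ℝ) (n : ℕ) (f : ℝ → ℝ → ℝ) (t x : ℝ) : ℝ :=
  (derivWithin (derivWithin (fun s => f s (kappan n x)) (Set.Icc 0 T)) (Set.Icc 0 T) t
    - discLap n (f t) (kappan n x) - b (f t (kappan n x))) / σ (f t (kappan n x))

end

/-!
The difference `G^n_t(x, ·) - G^n_t(y, ·)` is the step function `∑ⱼ bⱼ φⱼ(κₙ ·)` with
`bⱼ = sin(jπt√cⱼ)/(jπ√cⱼ) · (Πₙφⱼ(x) - Πₙφⱼ(y))`. The grid vectors `(φⱼ(i/n))ᵢ`, `1 ≤ j < n`, are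
orthonormal for the weight `1/n` (a Dirichlet-kernel telescoping), so the integral equals `∑ⱼ bⱼ²`.
Jordan's inequality gives `√cⱼ ≥ 2/π`, and `Πₙφⱼ` is `√2 jπ`-Lipschitz and bounded by `√2`, so
`bⱼ² ≤ min(π²|x-y|²/2, 2/j²)`; summing this minimum gives `(π²/2 + 4)|x - y|`.
-/

open Finset

section Interpolation

variable {n : ℕ} {w : ℝ → ℝ}

lemma floor_intCast_div_mul (hn : 0 < n) (k : ℤ) : ⌊(k / n : ℝ) * n⌋ = k := by
  rw [div_mul_cancel₀ _ (by positivity), Int.floor_intCast]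

lemma Pin_eq (x : ℝ) :
    Pin n w x =
      w (⌊x * n⌋ / n) + (n * x - ⌊x * n⌋) * (w ((⌊x * n⌋ + 1) / n) - w (⌊x * n⌋ / n)) := by
  rw [Pin, kappan, add_div]

lemma Pin_intCast_div (hn : 0 < n) (k : ℤ) : Pin n w (k / n) = w (k / n) := by
  rw [Pin_eq, floor_intCast_div_mul hn, mul_div_cancel₀ _ (by positivity)]
  ring

lemma Pin_eq_of_mem_Icc (hn : 0 < n) {a : ℤ} {x : ℝ} (hx : x ∈ Set.Icc (a / n : ℝ) ((a + 1) / n)) :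
    Pin n w x = w (a / n) + (n * x - a) * (w ((a + 1) / n) - w (a / n)) := by
  have hn' : (0 : ℝ) < n := by positivity
  rcases eq_or_lt_of_le hx.2 with hx' | hx'
  · have := Pin_intCast_div (w := w) hn (a + 1)
    push_cast at this
    rw [hx', this, mul_div_cancel₀ _ hn'.ne']
    ring
  · have hfloor : ⌊x * n⌋ = a := by
      rw [Int.floor_eq_iff]
      constructor
      · exact (div_le_iff₀ hn').1 hx.1
      · exact (lt_div_iff₀ hn').1 hx'
    rw [Pin_eq, hfloor]

lemma abs_Pin_le {M : ℝ} (hM : ∀ k : ℤ, |w (k / n)| ≤ M) (x : ℝ) :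
    |Pin n w x| ≤ M := by
  rw [Pin_eq]
  set a := ⌊x * n⌋
  set θ : ℝ := n * x - a
  have hθ₀ : 0 ≤ θ := by linarith [Int.floor_le (x * n)]
  have hθ₁ : θ ≤ 1 := by linarith [Int.lt_floor_add_one (x * n)]
  have hM₁ : |w ((a + 1) / n)| ≤ M := by exact_mod_cast hM (a + 1)
  calc _ = |(1 - θ) * w (a / n) + θ * w ((a + 1) / n)| := by ring_nf
    _ ≤ (1 - θ) * |w (a / n)| + θ * |w ((a + 1) / n)| := by
        refine (abs_add_le _ _).trans_eq ?_
        rw [abs_mul, abs_mul, abs_of_nonneg hθ₀, abs_of_nonneg (by linarith)]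
    _ ≤ (1 - θ) * M + θ * M := by
        gcongr
        exact hM a
    _ = M := by ring

variable {L : ℝ}

lemma abs_Pin_sub_le_of_le_of_le_floor_add_one
    (hL : ∀ k : ℤ, |w ((k + 1) / n) - w (k / n)| ≤ L / n) (hn : 0 < n) {x y : ℝ} (hxy : x ≤ y)
    (hy : y ≤ (⌊x * n⌋ + 1) / n) : |Pin n w x - Pin n w y| ≤ L * (y - x) := by
  have hn' : (0 : ℝ) < n := by positivity
  set a := ⌊x * n⌋
  have hx : x ∈ Set.Icc (a / n : ℝ) ((a + 1) / n) :=
    ⟨(div_le_iff₀ hn').2 (Int.floor_le _), (le_div_iff₀ hn').2 (Int.lt_floor_add_one _).le⟩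
  rw [Pin_eq_of_mem_Icc hn hx, Pin_eq_of_mem_Icc hn ⟨hx.1.trans hxy, hy⟩]
  have hnyx : 0 ≤ n * (y - x) := mul_nonneg hn'.le (sub_nonneg.2 hxy)
  calc _ = |n * (y - x) * (w ((a + 1) / n) - w (a / n))| := by rw [abs_sub_comm]; ring_nf
    _ = n * (y - x) * |w ((a + 1) / n) - w (a / n)| := by rw [abs_mul, abs_of_nonneg hnyx]
    _ ≤ n * (y - x) * (L / n) := mul_le_mul_of_nonneg_left (hL a) hnyx
    _ = L * (y - x) := by field_simp

lemma abs_Pin_sub_le_of_le (hL : ∀ k : ℤ, |w ((k + 1) / n) - w (k / n)| ≤ L / n)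
    (hn : 0 < n) (k : ℕ) {x y : ℝ} (hxy : x ≤ y)
    (hk : ⌊y * n⌋ ≤ ⌊x * n⌋ + k) : |Pin n w x - Pin n w y| ≤ L * (y - x) := by
  have hn' : (0 : ℝ) < n := by positivity
  induction k generalizing x with
  | zero =>
    refine abs_Pin_sub_le_of_le_of_le_floor_add_one hL hn hxy ((le_div_iff₀ hn').2 ?_)
    have hy : (⌊y * n⌋ : ℝ) ≤ ⌊x * n⌋ := by exact_mod_cast (by omega : ⌊y * n⌋ ≤ ⌊x * n⌋)
    linarith [Int.lt_floor_add_one (y * n)]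
  | succ k ih =>
    rcases le_or_gt y ((⌊x * n⌋ + 1) / n) with hy | hy
    · exact abs_Pin_sub_le_of_le_of_le_floor_add_one hL hn hxy hy
    set x' : ℝ := (⌊x * n⌋ + 1) / n
    have hxx' : x ≤ x' := (le_div_iff₀ hn').2 (Int.lt_floor_add_one _).le
    have hfloor : ⌊x' * n⌋ = ⌊x * n⌋ + 1 := by
      simpa using floor_intCast_div_mul hn (⌊x * n⌋ + 1)
    calc |Pin n w x - Pin n w y| ≤ |Pin n w x - Pin n w x'| + |Pin n w x' - Pin n w y| :=
          abs_sub_le _ _ _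
      _ ≤ L * (x' - x) + L * (y - x') := by
          gcongr
          · exact abs_Pin_sub_le_of_le_of_le_floor_add_one hL hn hxx' le_rfl
          · exact ih hy.le (by omega)
      _ = L * (y - x) := by ring

lemma abs_Pin_sub_le (hL : ∀ k : ℤ, |w ((k + 1) / n) - w (k / n)| ≤ L / n)
    (hn : 0 < n) (x y : ℝ) : |Pin n w x - Pin n w y| ≤ L * |x - y| := by
  rcases le_total x y with hxy | hxy
  · rw [abs_sub_comm x y, abs_of_nonneg (sub_nonneg.2 hxy)]
    exact abs_Pin_sub_le_of_le hL hn (⌊y * n⌋ - ⌊x * n⌋).toNat hxy (by omega)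
  · rw [abs_sub_comm, abs_of_nonneg (sub_nonneg.2 hxy)]
    exact abs_Pin_sub_le_of_le hL hn (⌊x * n⌋ - ⌊y * n⌋).toNat hxy (by omega)

end Interpolation

lemma abs_phi_le (j : ℕ) (x : ℝ) : |phi j x| ≤ √2 := by
  rw [phi, abs_mul, abs_of_nonneg (Real.sqrt_nonneg 2)]
  exact mul_le_of_le_one_right (Real.sqrt_nonneg 2) (abs_sin_le_one _)

lemma abs_phi_sub_phi_le (j : ℕ) (x y : ℝ) : |phi j x - phi j y| ≤ √2 * j * π * |x - y| := by
  rw [phi, phi, ← mul_sub, abs_mul, abs_of_nonneg (Real.sqrt_nonneg 2)]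
  calc _ ≤ √2 * |j * π * x - j * π * y| :=
        mul_le_mul_of_nonneg_left (abs_sin_sub_sin_le _ _) (Real.sqrt_nonneg 2)
    _ = _ := by rw [← mul_sub, abs_mul, abs_of_nonneg (by positivity : (0 : ℝ) ≤ j * π)]; ring

lemma two_mul_sin_half_mul_sum_range_cos (θ : ℝ) (n : ℕ) :
    2 * sin (θ / 2) * ∑ i ∈ range n, cos (i * θ) = sin ((n - 1 / 2) * θ) + sin (θ / 2) := by
  induction n with
  | zero => rw [show ((0 : ℕ) - 1 / 2 : ℝ) * θ = -(θ / 2) by push_cast; ring, sin_neg]; simp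
  | succ n ih =>
    rw [sum_range_succ, mul_add, ih]
    have e₁ : ((n + 1 : ℕ) - 1 / 2 : ℝ) * θ = n * θ + θ / 2 := by push_cast; ring
    have e₂ : ((n : ℝ) - 1 / 2) * θ = n * θ - θ / 2 := by ring
    rw [e₁, e₂, sin_add, sin_sub]
    ring

lemma sum_range_cos_mul {θ : ℝ} {n : ℕ} (hθ : sin (θ / 2) ≠ 0) (hn : sin (n * θ) = 0) :
    ∑ i ∈ range n, cos (i * θ) = (1 - cos (n * θ)) / 2 := by
  have h := two_mul_sin_half_mul_sum_range_cos θ n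
  rw [show ((n : ℝ) - 1 / 2) * θ = n * θ - θ / 2 by ring, sin_sub, hn] at h
  apply mul_left_cancel₀ (mul_ne_zero two_ne_zero hθ)
  linear_combination h

lemma phi_mul_phi (j k : ℕ) (x : ℝ) :
    phi j x * phi k x = cos ((j - k) * π * x) - cos ((j + k) * π * x) := by
  have h2 : √2 * √2 = 2 := Real.mul_self_sqrt (by norm_num)
  rw [phi, phi, show (j - k) * π * x = j * π * x - k * π * x by ring,
    show (j + k) * π * x = j * π * x + k * π * x by ring, cos_sub, cos_add]
  linear_combination (sin (j * π * x) * sin (k * π * x)) * h2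

lemma sum_range_cos_int_mul_pi_mul_div {n : ℕ} {m : ℤ} (hm : m ≠ 0) (hmn : |m| < 2 * n) :
    ∑ i ∈ range n, cos (m * π * (i / n)) = (1 - cos (m * π)) / 2 := by
  have hn : (0 : ℝ) < n := by
    have : (0 : ℤ) < n := by cases abs_cases m <;> omega
    exact_mod_cast this
  have hsin : sin (m * π / n / 2) ≠ 0 := by
    have hm' : |(m : ℝ)| < 2 * n := by exact_mod_cast hmn
    rw [Ne, sin_eq_zero_iff_of_lt_of_lt]
    · positivity
    · rw [div_div, lt_div_iff₀ (by positivity)]; nlinarith [neg_abs_le (m : ℝ), pi_pos]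
    · rw [div_div, div_lt_iff₀ (by positivity)]; nlinarith [le_abs_self (m : ℝ), pi_pos]
  have := sum_range_cos_mul hsin (by rw [mul_div_cancel₀ _ hn.ne']; exact sin_int_mul_pi m)
  rw [mul_div_cancel₀ _ hn.ne'] at this
  rw [← this]
  refine sum_congr rfl fun i _ => ?_
  ring_nf

lemma sum_range_phi_mul_phi {n j k : ℕ} (hj : j ∈ Icc 1 (n - 1)) (hk : k ∈ Icc 1 (n - 1)) :
    1 / n * ∑ i ∈ range n, phi j (i / n) * phi k (i / n) = if j = k then 1 else 0 := by
  obtain ⟨hj₁, hjn⟩ := mem_Icc.1 hj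
  obtain ⟨hk₁, hkn⟩ := mem_Icc.1 hk
  have hn : (0 : ℝ) < n := Nat.cast_pos.2 (by omega)
  have hsum := sum_range_cos_int_mul_pi_mul_div (n := n) (m := j + k) (by omega)
    (by rw [abs_of_nonneg (by omega)]; omega)
  push_cast at hsum
  have hcos : cos ((j + k) * π) = cos ((j - k) * π) := by
    rw [add_mul, sub_mul, cos_add, cos_sub, sin_nat_mul_pi, sin_nat_mul_pi]
    ring
  simp_rw [phi_mul_phi, sum_sub_distrib, hsum, hcos]
  split_ifs with hjk
  · subst hjk
    simp [hn.ne']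
  · have hdiff := sum_range_cos_int_mul_pi_mul_div (n := n) (m := j - k) (by omega)
      (by cases abs_cases ((j : ℤ) - k) <;> omega)
    push_cast at hdiff
    rw [hdiff]
    ring

section StepFunctions

variable {n : ℕ}

lemma kappan_eq_of_mem_Ico (hn : 0 < n) {i : ℕ} {z : ℝ}
    (hz : z ∈ Set.Ico (i / n : ℝ) ((i + 1) / n)) :
    kappan n z = i / n := by
  have hn' : (0 : ℝ) < n := by positivity
  have : ⌊z * n⌋ = i := Int.floor_eq_iff.2 <| by
    push_cast
    exact ⟨(div_le_iff₀ hn').1 hz.1, (lt_div_iff₀ hn').1 hz.2⟩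
  rw [kappan, this, Int.cast_natCast]

lemma intervalIntegrable_comp_kappan (hn : 0 < n) (f : ℝ → ℝ) (i : ℕ) :
    IntervalIntegrable (fun z => f (kappan n z)) volume (i / n) ((i + 1) / n) := by
  refine (intervalIntegrable_const (c := f (i / n))).congr_uIoo fun z hz => ?_
  rw [Set.uIoo_of_le (by gcongr; linarith)] at hz
  rw [kappan_eq_of_mem_Ico hn (Set.Ioo_subset_Ico_self hz)]

lemma integral_comp_kappan_of_cell (hn : 0 < n) (f : ℝ → ℝ) (i : ℕ) :
    ∫ z in (i / n : ℝ)..((i + 1) / n), f (kappan n z) = f (i / n) / n := by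
  have hle : (i / n : ℝ) ≤ (i + 1) / n := by gcongr; linarith
  rw [intervalIntegral.integral_congr_Ioo_of_le (g := fun _ => f (i / n)) hle
    fun z hz => by rw [kappan_eq_of_mem_Ico hn (Set.Ioo_subset_Ico_self hz)]]
  rw [intervalIntegral.integral_const, smul_eq_mul]
  field_simp
  ring

lemma integral_comp_kappan (hn : 0 < n) (f : ℝ → ℝ) :
    ∫ z in (0 : ℝ)..1, f (kappan n z) = 1 / n * ∑ i ∈ range n, f (i / n) := by
  have h := intervalIntegral.sum_integral_adjacent_intervals (a := fun i : ℕ => (i / n : ℝ))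
    (μ := volume) (f := fun z => f (kappan n z)) (n := n)
    fun i _ => by simpa using intervalIntegrable_comp_kappan hn f i
  simp only [Nat.cast_zero, zero_div, Nat.cast_add, Nat.cast_one] at h
  rw [div_self (by positivity)] at h
  rw [← h, mul_sum]
  refine sum_congr rfl fun i _ => ?_
  rw [integral_comp_kappan_of_cell hn]
  ring

end StepFunctions

lemma mul_sum_sq_sum_eq_sum_sq {ι κ : Type*} [DecidableEq ι] {s : Finset ι} {t : Finset κ}
    {v : ι → κ → ℝ} {c : ℝ}
    (hv : ∀ j ∈ s, ∀ k ∈ s, c * ∑ i ∈ t, v j i * v k i = if j = k then 1 else 0) (b : ι → ℝ) :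
    c * ∑ i ∈ t, (∑ j ∈ s, b j * v j i) ^ 2 = ∑ j ∈ s, b j ^ 2 := by
  calc c * ∑ i ∈ t, (∑ j ∈ s, b j * v j i) ^ 2
      = ∑ j ∈ s, ∑ k ∈ s, b j * b k * (c * ∑ i ∈ t, v j i * v k i) := by
        simp_rw [sq, sum_mul_sum, mul_sum]
        rw [sum_comm]
        refine sum_congr rfl fun j _ => ?_
        rw [sum_comm]
        exact sum_congr rfl fun k _ => sum_congr rfl fun i _ => by ring
    _ = ∑ j ∈ s, b j ^ 2 := by
        refine sum_congr rfl fun j hj => ?_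
        rw [sum_congr rfl fun k hk => by rw [hv j hj k hk]]
        simp [hj, sq]

lemma two_div_pi_le_sqrt_cn {n j : ℕ} (hj : j ∈ Icc 1 (n - 1)) : 2 / π ≤ √(cn n j) := by
  obtain ⟨hj₁, hjn⟩ := mem_Icc.1 hj
  have hj' : (0 : ℝ) < j := Nat.cast_pos.2 hj₁
  have hjn' : (j : ℝ) ≤ n := by exact_mod_cast (by omega : j ≤ n)
  have hn : (0 : ℝ) < n := hj'.trans_le hjn'
  set u : ℝ := j * π / (2 * n)
  have hu₀ : 0 < u := by positivity
  have hu : u ≤ π / 2 := by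
    rw [div_le_div_iff₀ (by positivity) two_pos]
    nlinarith [pi_pos]
  have hsin : 2 / π ≤ sin u / u := by
    rw [le_div_iff₀ hu₀]
    exact mul_le_sin hu₀.le hu
  have hcn : cn n j = (sin u / u) ^ 2 := (div_pow _ _ 2).symm
  rwa [hcn, Real.sqrt_sq ((div_nonneg zero_le_two pi_pos.le).trans hsin)]

lemma abs_sin_div_le {n j : ℕ} (hj : j ∈ Icc 1 (n - 1)) (u : ℝ) :
    |sin u / (j * π * √(cn n j))| ≤ 1 / (2 * j) := by
  have hj' : (0 : ℝ) < j := Nat.cast_pos.2 (mem_Icc.1 hj).1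
  have hden : 2 * j ≤ j * π * √(cn n j) :=
    calc (2 : ℝ) * j = j * π * (2 / π) := by field_simp
      _ ≤ j * π * √(cn n j) := by gcongr; exact two_div_pi_le_sqrt_cn hj
  rw [abs_div, abs_of_pos ((by positivity : (0 : ℝ) < 2 * j).trans_le hden)]
  exact div_le_div₀ zero_le_one (abs_sin_le_one u) (by positivity) hden

/-- Split at `J = ⌊1/d⌋`: at most `J ≤ 1/d` terms are below `A d²`, and the tail `∑_{j>J} B/j²`
is at most `2B/(J+1) ≤ 2Bd`. -/
lemma sum_Icc_le_of_le_min {a : ℕ → ℝ} {A B d : ℝ} (hA : 0 ≤ A) (hB : 0 ≤ B) (hd : 0 ≤ d) (N : ℕ)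
    (h₁ : ∀ j ∈ Icc 1 N, a j ≤ A * d ^ 2) (h₂ : ∀ j ∈ Icc 1 N, a j ≤ B / j ^ 2) :
    ∑ j ∈ Icc 1 N, a j ≤ (A + 2 * B) * d := by
  rcases hd.eq_or_lt with rfl | hd
  · simpa using sum_nonpos fun j hj => by simpa using h₁ j hj
  set J := ⌊1 / d⌋₊
  have hJ : J * d ≤ 1 := (le_div_iff₀ hd).1 (Nat.floor_le (by positivity))
  have hJ' : 1 < (J + 1) * d := (div_lt_iff₀ hd).1 (Nat.lt_floor_add_one _)
  have hlow : ∑ j ∈ Icc 1 N with j ≤ J, a j ≤ A * d :=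
    calc ∑ j ∈ Icc 1 N with j ≤ J, a j ≤ #{j ∈ Icc 1 N | j ≤ J} * (A * d ^ 2) := by
          simpa using sum_le_card_nsmul _ _ _ fun j hj => h₁ j (mem_filter.1 hj).1
      _ ≤ J * (A * d ^ 2) := by
          gcongr
          calc #{j ∈ Icc 1 N | j ≤ J} ≤ #(Icc 1 J) :=
                card_le_card fun j hj => by simp only [mem_filter, mem_Icc] at hj ⊢; omega
            _ = J := by simp
      _ = J * d * (A * d) := by ring
      _ ≤ A * d := mul_le_of_le_one_left (by positivity) hJ
  have hhigh : ∑ j ∈ Icc 1 N with ¬j ≤ J, a j ≤ 2 * B * d :=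
    calc ∑ j ∈ Icc 1 N with ¬j ≤ J, a j ≤ ∑ j ∈ Icc 1 N with ¬j ≤ J, B * ((j : ℝ) ^ 2)⁻¹ :=
          sum_le_sum fun j hj => (h₂ j (mem_filter.1 hj).1).trans_eq (div_eq_mul_inv _ _)
      _ ≤ ∑ j ∈ Ioo J (N + 1), B * ((j : ℝ) ^ 2)⁻¹ :=
          sum_le_sum_of_subset_of_nonneg
            (fun j hj => by simp only [mem_filter, mem_Icc, mem_Ioo] at hj ⊢; omega)
            fun _ _ _ => by positivity
      _ ≤ B * (2 / (J + 1)) := by rw [← mul_sum]; gcongr; exact sum_Ioo_inv_sq_le J (N + 1)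
      _ ≤ 2 * B * d := by
          rw [mul_div_assoc', div_le_iff₀ (by positivity)]
          nlinarith
  rw [← sum_filter_add_sum_filter_not _ (· ≤ J)]
  linarith

lemma sq_sin_div_mul_le {n j : ℕ} (hj : j ∈ Icc 1 (n - 1)) (u : ℝ) {p P : ℝ} (hp : |p| ≤ P) :
    (sin u / (j * π * √(cn n j)) * p) ^ 2 ≤ (P / (2 * j)) ^ 2 := by
  rw [← sq_abs, abs_mul, div_eq_mul_one_div P, mul_comm]
  exact pow_le_pow_left₀ (by positivity)
    (mul_le_mul hp (abs_sin_div_le hj u) (abs_nonneg _) ((abs_nonneg p).trans hp)) 2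

lemma abs_Pin_phi_sub_le {n : ℕ} (hn : 0 < n) (j : ℕ) (x y : ℝ) :
    |Pin n (phi j) x - Pin n (phi j) y| ≤ √2 * j * π * |x - y| :=
  abs_Pin_sub_le (fun k => (abs_phi_sub_phi_le j _ _).trans_eq <| by
    rw [← sub_div, add_sub_cancel_left, abs_of_pos (by positivity)]; ring) hn x y

lemma abs_Pin_phi_sub_le_two_mul (n j : ℕ) (x y : ℝ) :
    |Pin n (phi j) x - Pin n (phi j) y| ≤ 2 * √2 :=
  (abs_sub _ _).trans <| by
    linarith [abs_Pin_le (fun k => abs_phi_le j (k / n)) x (n := n),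
      abs_Pin_le (fun k => abs_phi_le j (k / n)) y (n := n)]

lemma greenGn_sub_greenGn (n : ℕ) (t x y z : ℝ) :
    greenGn n t x z - greenGn n t y z =
      ∑ j ∈ Icc 1 (n - 1), sin (j * π * t * √(cn n j)) / (j * π * √(cn n j)) *
        (Pin n (phi j) x - Pin n (phi j) y) * phi j (kappan n z) := by
  rw [greenGn, greenGn, ← sum_sub_distrib]
  exact sum_congr rfl fun j _ => by ring

theorem stmt3_general (T : ℝ) :
    ∃ K : ℝ, 0 < K ∧ ∀ n : ℕ, 1 ≤ n →
      ∀ t ∈ Set.Icc (0:ℝ) T, ∀ x ∈ Set.Icc (0:ℝ) 1, ∀ y ∈ Set.Icc (0:ℝ) 1,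
        (∫ z in (0:ℝ)..1, |greenGn n t x z - greenGn n t y z|^2) ≤ K * |x - y| := by
  refine ⟨π ^ 2 / 2 + 2 * 2, by positivity, fun n hn t _ x _ y _ => ?_⟩
  set b : ℕ → ℝ := fun j =>
    sin (j * π * t * √(cn n j)) / (j * π * √(cn n j)) * (Pin n (phi j) x - Pin n (phi j) y)
  have hGn (z : ℝ) : |greenGn n t x z - greenGn n t y z| ^ 2 =
      (∑ j ∈ Icc 1 (n - 1), b j * phi j (kappan n z)) ^ 2 := by
    rw [sq_abs, greenGn_sub_greenGn]
  have h2 : √2 ^ 2 = 2 := Real.sq_sqrt zero_le_two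
  calc ∫ z in (0:ℝ)..1, |greenGn n t x z - greenGn n t y z| ^ 2
      = 1 / n * ∑ i ∈ range n, (∑ j ∈ Icc 1 (n - 1), b j * phi j (i / n)) ^ 2 := by
        simp_rw [hGn]
        exact integral_comp_kappan hn fun u => (∑ j ∈ Icc 1 (n - 1), b j * phi j u) ^ 2
    _ = ∑ j ∈ Icc 1 (n - 1), b j ^ 2 :=
        mul_sum_sq_sum_eq_sum_sq (fun j hj k hk => sum_range_phi_mul_phi hj hk) b
    _ ≤ (π ^ 2 / 2 + 2 * 2) * |x - y| := by
        refine sum_Icc_le_of_le_min (by positivity) zero_le_two (abs_nonneg _) _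
          (fun j hj => (sq_sin_div_mul_le hj _ (abs_Pin_phi_sub_le hn j x y)).trans_eq ?_)
          (fun j hj => (sq_sin_div_mul_le hj _ (abs_Pin_phi_sub_le_two_mul n j x y)).trans_eq ?_)
        all_goals
          have : (j : ℝ) ≠ 0 := Nat.cast_ne_zero.2 (by grind)
          simp only [div_pow, mul_pow, h2]
          field_simp

theorem stmt3 (T : ℝ) (hT : 0 < T) :
    ∃ K : ℝ, 0 < K ∧ ∀ n : ℕ, 1 ≤ n →
      ∀ t ∈ Set.Icc (0:ℝ) T, ∀ x ∈ Set.Icc (0:ℝ) 1, ∀ y ∈ Set.Icc (0:ℝ) 1,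
        (∫ z in (0:ℝ)..1, |greenGn n t x z - greenGn n t y z|^2) ≤ K * |x - y| :=
  stmt3_general T
end

section
/- For every n∈ℕ⁺, every t∈[0,T], every x∈[0,1] and every y∈[0,1], the discrete Green function satisfies the discrete wave equation in the second variable: ∂²/∂t² G^n_t(x,y) = Δ_{n,y} G^n_t(x,y), where Δ_{n,y} denotes the discrete Dirichlet Laplacian applied in the variable y. -/
open MeasureTheory Real Filter
open scoped ENNReal

/-! In time, every term of `G^n_t(x, y)` is a multiple of `sin (ω t) / ω` with `ω = jπ√c^n_j`,
which satisfies `g'' = -ω² g`. In space, every term is a multiple of `φ_j ∘ κ_n`, which is an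
eigenfunction of `Δ_n` with the same eigenvalue `-ω² = -4n² sin² (jπ/(2n))`: on the cells
`[1/n, 1)` this is `sin (a + h) - 2 sin a + sin (a - h) = -4 sin² (h/2) sin a` with `h = jπ/n`,
and on `[0, 1/n) ∪ {1}` both sides vanish because `κ_n` maps these points to `0` or `1`, where
`φ_j` vanishes. -/

noncomputable def freqn (n j : ℕ) : ℝ := j * π * √(cn n j)

lemma greenGn_eq_sum (n : ℕ) (t x y : ℝ) :
    greenGn n t x y = ∑ j ∈ Finset.Icc 1 (n - 1),
      Real.sin (freqn n j * t) / freqn n j * Pin n (phi j) x * phi j (kappan n y) := by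
  refine Finset.sum_congr rfl fun j _ => ?_
  rw [freqn]
  ring_nf

lemma freqn_sq (n j : ℕ) : freqn n j ^ 2 = (2 * n * Real.sin (j * π / (2 * n))) ^ 2 := by
  have hcn : 0 ≤ cn n j := by unfold cn; positivity
  rw [freqn, mul_pow, Real.sq_sqrt hcn, cn]
  rcases eq_or_ne (j * π / (2 * n)) 0 with h | h
  · simp [h]
  · have hj : (j : ℝ) ≠ 0 := by rintro h0; simp [h0] at h
    have hn : (n : ℝ) ≠ 0 := by rintro h0; simp [h0] at h
    field_simp

lemma iteratedDeriv_two_sin_const_mul (ω t : ℝ) :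
    iteratedDeriv 2 (fun s => Real.sin (ω * s)) t = -ω ^ 2 * Real.sin (ω * t) := by
  rw [iteratedDeriv_comp_const_mul Real.contDiff_sin]
  simp

lemma sin_add_sub_two_mul_sin_add_sin_sub (a h : ℝ) :
    Real.sin (a + h) - 2 * Real.sin a + Real.sin (a - h)
      = -(2 * Real.sin (h / 2)) ^ 2 * Real.sin a := by
  have hcos : Real.cos h = 1 - 2 * Real.sin (h / 2) ^ 2 :=
    calc Real.cos h = Real.cos (2 * (h / 2)) := by ring_nf
      _ = 1 - 2 * Real.sin (h / 2) ^ 2 := by rw [Real.cos_two_mul', Real.cos_sq']; ring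
  rw [Real.sin_add, Real.sin_sub, hcos]
  ring

lemma phi_second_difference (n j : ℕ) (a : ℝ) :
    (n : ℝ) ^ 2 * (phi j (a + 1 / n) - 2 * phi j a + phi j (a - 1 / n))
      = -freqn n j ^ 2 * phi j a := by
  have h := sin_add_sub_two_mul_sin_add_sin_sub (j * π * a) (j * π / n)
  rw [div_div, mul_comm (n : ℝ) 2] at h
  have hp : j * π * (a + 1 / n) = j * π * a + j * π / n := by ring
  have hm : j * π * (a - 1 / n) = j * π * a - j * π / n := by ring
  simp only [phi, freqn_sq, hp, hm]
  linear_combination (n : ℝ) ^ 2 * √2 * h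

lemma kappan_kappan_add_intCast_div {n : ℕ} (hn : n ≠ 0) (y : ℝ) (m : ℤ) :
    kappan n (kappan n y + m / n) = kappan n y + m / n := by
  have hn' : (n : ℝ) ≠ 0 := Nat.cast_ne_zero.mpr hn
  have h : (kappan n y + m / n) * n = ((⌊y * n⌋ + m : ℤ) : ℝ) := by
    rw [kappan]; push_cast; field_simp
  rw [kappan, h, Int.floor_intCast, kappan]
  push_cast
  ring

lemma discLap_comp_kappan {n : ℕ} (hn : n ≠ 0) (w : ℝ → ℝ) {y : ℝ}
    (hy : y ∈ Set.Ico ((1 : ℝ) / n) 1) :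
    discLap n (fun z => w (kappan n z)) y
      = (n : ℝ) ^ 2 * (w (kappan n y + 1 / n) - 2 * w (kappan n y) + w (kappan n y - 1 / n)) := by
  have hp := kappan_kappan_add_intCast_div hn y 1
  have hz := kappan_kappan_add_intCast_div hn y 0
  have hm := kappan_kappan_add_intCast_div hn y (-1)
  push_cast at hp hz hm
  rw [zero_div, add_zero] at hz
  rw [neg_div, ← sub_eq_add_neg] at hm
  rw [discLap, if_pos hy, hp, hz, hm]

lemma phi_kappan_eq_zero {n : ℕ} (hn : n ≠ 0) (j : ℕ) {y : ℝ} (hy : y ∈ Set.Icc (0 : ℝ) 1)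
    (hy' : y ∉ Set.Ico ((1 : ℝ) / n) 1) : phi j (kappan n y) = 0 := by
  have hn' : (0 : ℝ) < n := by positivity
  rcases lt_or_eq_of_le hy.2 with hy1 | rfl
  · have hfloor : ⌊y * n⌋ = 0 := by
      rw [Int.floor_eq_zero_iff]
      refine ⟨by nlinarith [hy.1], ?_⟩
      have : y < 1 / n := by simpa [hy1] using hy'
      rwa [lt_div_iff₀ hn'] at this
    simp [kappan, hfloor, phi]
  · have : kappan n 1 = 1 := by simp [kappan, hn'.ne']
    simp [this, phi, Real.sin_nat_mul_pi]

lemma discLap_phi_comp_kappan {n : ℕ} (hn : n ≠ 0) (j : ℕ) {y : ℝ}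
    (hy : y ∈ Set.Icc (0 : ℝ) 1) :
    discLap n (fun z => phi j (kappan n z)) y = -freqn n j ^ 2 * phi j (kappan n y) := by
  by_cases h : y ∈ Set.Ico ((1 : ℝ) / n) 1
  · rw [discLap_comp_kappan hn _ h, phi_second_difference]
  · rw [discLap, if_neg h, phi_kappan_eq_zero hn j hy h, mul_zero]

lemma discLap_fun_sum_mul {ι : Type*} (n : ℕ) (s : Finset ι) (c : ι → ℝ) (f : ι → ℝ → ℝ)
    (y : ℝ) :
    discLap n (fun z => ∑ i ∈ s, c i * f i z) y = ∑ i ∈ s, c i * discLap n (f i) y := by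
  unfold discLap
  split_ifs
  · simp only [Finset.mul_sum, ← Finset.sum_sub_distrib, ← Finset.sum_add_distrib]
    exact Finset.sum_congr rfl fun i _ => by ring
  · simp

theorem stmt6_general (n : ℕ)
    (t : ℝ) (x : ℝ)
    (y : ℝ) (hy : y ∈ Set.Icc (0:ℝ) 1) :
    iteratedDeriv 2 (fun s => greenGn n s x y) t = discLap n (fun z => greenGn n t x z) y := by
  simp only [greenGn_eq_sum]
  rw [iteratedDeriv_fun_sum fun j _ => by fun_prop, discLap_fun_sum_mul]
  refine Finset.sum_congr rfl fun j hj => ?_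
  have hn : n ≠ 0 := by have := Finset.mem_Icc.mp hj; omega
  simp only [iteratedDeriv_mul_const_field, iteratedDeriv_div_const,
    iteratedDeriv_two_sin_const_mul, discLap_phi_comp_kappan hn j hy]
  ring

theorem stmt6 (T : ℝ) (hT : 0 < T) (n : ℕ) (hn : 1 ≤ n)
    (t : ℝ) (ht : t ∈ Set.Icc (0:ℝ) T) (x : ℝ) (hx : x ∈ Set.Icc (0:ℝ) 1)
    (y : ℝ) (hy : y ∈ Set.Icc (0:ℝ) 1) :
    iteratedDeriv 2 (fun s => greenGn n s x y) t = discLap n (fun z => greenGn n t x z) y :=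
  stmt6_general n t x y hy
end
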